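/- Let T^i be a connected sequence of functors between abelian categories 𝒜 and ℬ, let f : M → N be a morphism in 𝒜, and let 𝒮 be a Serre subcategory of ℬ. If for some i the objects T^i(Coker f) and T^{i+1}(Ker f) belong to 𝒮, then Coker(T^i f) and Ker(T^{i+1} f) belong to 𝒮. -/
import Mathlib


open CategoryTheory Limits

noncomputable section

variable {A : Type} [CommRing A]

universe v u v' u'

/-- A (cohomological) connected sequence of functors between abelian categories:
every short exact sequence induces a long exact sequence via connecting morphisms. -/
structure ConnectedSequence (𝒜 : Type u) [Category.{v} 𝒜] [Abelian 𝒜]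
    (ℬ : Type u') [Category.{v'} ℬ] [Abelian ℬ] where
  T : ℕ → 𝒜 ⥤ ℬ
  δ : ∀ (S : ShortComplex 𝒜), S.ShortExact → ∀ i : ℕ,
    (T i).obj S.X₃ ⟶ (T (i + 1)).obj S.X₁
  zero₁ : ∀ (S : ShortComplex 𝒜) (_ : S.ShortExact) (i : ℕ),
    (T i).map S.f ≫ (T i).map S.g = 0
  zero₂ : ∀ (S : ShortComplex 𝒜) (hS : S.ShortExact) (i : ℕ),
    (T i).map S.g ≫ δ S hS i = 0
  zero₃ : ∀ (S : ShortComplex 𝒜) (hS : S.ShortExact) (i : ℕ),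
    δ S hS i ≫ (T (i + 1)).map S.f = 0
  exact₁ : ∀ (S : ShortComplex 𝒜) (hS : S.ShortExact) (i : ℕ),
    (ShortComplex.mk ((T i).map S.f) ((T i).map S.g) (zero₁ S hS i)).Exact
  exact₂ : ∀ (S : ShortComplex 𝒜) (hS : S.ShortExact) (i : ℕ),
    (ShortComplex.mk ((T i).map S.g) (δ S hS i) (zero₂ S hS i)).Exact
  exact₃ : ∀ (S : ShortComplex 𝒜) (hS : S.ShortExact) (i : ℕ),
    (ShortComplex.mk (δ S hS i) ((T (i + 1)).map S.f) (zero₃ S hS i)).Exact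

section Aux

variable {C : Type u'} [Category.{v'} C] [Abelian C]

/-- If `A → B → C` is exact and `P A`, `P C`, then `P B`, for a Serre class `P`. -/
theorem serre_mid (P : C → Prop)
    (hP_sub : ∀ {X Y : C} (ι : X ⟶ Y) [Mono ι], P Y → P X)
    (hP_quot : ∀ {X Y : C} (p : X ⟶ Y) [Epi p], P X → P Y)
    (hP_ext : ∀ (S : ShortComplex C), S.ShortExact → P S.X₁ → P S.X₃ → P S.X₂)
    (S : ShortComplex C) (hS : S.Exact) (h1 : P S.X₁) (h3 : P S.X₃) : P S.X₂ := by
  haveI := hS.epi_toCycles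
  have hK : P (kernel S.g) := hP_quot (S.toCycles ≫ S.cyclesIsoKernel.hom) h1
  have hI : P (Abelian.image S.g) := hP_sub (Abelian.image.ι S.g) h3
  have hC : P (cokernel (kernel.ι S.g)) := hP_sub (Abelian.coimageIsoImage S.g).hom hI
  refine hP_ext (ShortComplex.mk (kernel.ι S.g) (cokernel.π (kernel.ι S.g))
    (cokernel.condition _)) ⟨ShortComplex.exact_of_g_is_cokernel _ (cokernelIsCokernel _)⟩ hK hC

/-- The sequence `ker u → ker (u ≫ v) → ker v` is exact. -/
theorem ker_seq_exact {X Y Z : C} (u : X ⟶ Y) (v : Y ⟶ Z) :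
    (ShortComplex.mk
      (kernel.lift (u ≫ v) (kernel.ι u) (by rw [← Category.assoc, kernel.condition, zero_comp]))
      (kernel.lift v (kernel.ι (u ≫ v) ≫ u) (by rw [Category.assoc, kernel.condition]))
      (by rw [← cancel_mono (kernel.ι v)]; simp)).Exact := by
  rw [ShortComplex.exact_iff_exact_up_to_refinements]
  intro A x₂ hx₂
  have h : (x₂ ≫ kernel.ι (u ≫ v)) ≫ u = 0 := by
    have := hx₂ =≫ kernel.ι v
    simpa [Category.assoc] using this
  refine ⟨A, 𝟙 A, inferInstance, kernel.lift u (x₂ ≫ kernel.ι (u ≫ v)) h, ?_⟩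
  rw [← cancel_mono (kernel.ι (u ≫ v))]
  simp

/-- The sequence `coker u → coker (u ≫ v) → coker v` is exact. -/
theorem coker_seq_exact {X Y Z : C} (u : X ⟶ Y) (v : Y ⟶ Z) :
    (ShortComplex.mk
      (cokernel.desc u (v ≫ cokernel.π (u ≫ v))
        (by rw [← Category.assoc, cokernel.condition]))
      (cokernel.desc (u ≫ v) (cokernel.π v)
        (by rw [Category.assoc, cokernel.condition, comp_zero]))
      (by rw [← cancel_epi (cokernel.π u)]; simp)).Exact := by
  rw [ShortComplex.exact_iff_exact_up_to_refinements]
  intro A x₂ hx₂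
  obtain ⟨A', π, hπ, y, hy⟩ := surjective_up_to_refinements_of_epi
    (cokernel.π (u ≫ v)) x₂
  have h : y ≫ cokernel.π v = 0 := by
    have : y ≫ cokernel.π (u ≫ v) ≫ cokernel.desc (u ≫ v) (cokernel.π v)
        (by rw [Category.assoc, cokernel.condition, comp_zero]) = 0 := by
      rw [← Category.assoc, ← hy, Category.assoc, hx₂, comp_zero]
    simpa using this
  obtain ⟨A'', π', hπ', z, hz⟩ :=
    ((ShortComplex.mk v (cokernel.π v) (cokernel.condition v)).exact_of_g_is_cokernel
      (cokernelIsCokernel v)).exact_up_to_refinements y h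
  refine ⟨A'', π' ≫ π, epi_comp _ _, z ≫ cokernel.π u, ?_⟩
  dsimp at hz ⊢
  rw [Category.assoc, Category.assoc, cokernel.π_desc, hy, ← Category.assoc, hz,
    Category.assoc]

end Aux

/-- If `(T^i)` is a connected sequence of functors between abelian categories,
`f : M ⟶ N`, and `𝒮` (given by the predicate `P`) is a Serre subcategory of `ℬ`,
then `T^i(Coker f), T^{i+1}(Ker f) ∈ 𝒮` implies
`Coker(T^i f), Ker(T^{i+1} f) ∈ 𝒮`. -/
theorem stmt2 {𝒜 : Type u} [Category.{v} 𝒜] [Abelian 𝒜]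
    {ℬ : Type u'} [Category.{v'} ℬ] [Abelian ℬ]
    (T : ConnectedSequence 𝒜 ℬ)
    (P : ℬ → Prop)
    (hP_sub : ∀ {X Y : ℬ} (ι : X ⟶ Y) [Mono ι], P Y → P X)
    (hP_quot : ∀ {X Y : ℬ} (p : X ⟶ Y) [Epi p], P X → P Y)
    (hP_ext : ∀ (S : ShortComplex ℬ), S.ShortExact → P S.X₁ → P S.X₃ → P S.X₂)
    {M N : 𝒜} (f : M ⟶ N) (i : ℕ)
    (h1 : P ((T.T i).obj (cokernel f)))
    (h2 : P ((T.T (i + 1)).obj (kernel f))) :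
    P (cokernel ((T.T i).map f)) ∧ P (kernel ((T.T (i + 1)).map f)) := by
  set e := Abelian.factorThruImage f with he
  set m := Abelian.image.ι f with hm
  have hfac : e ≫ m = f := Abelian.image.fac f
  -- the short exact sequence `ker f → M → im f`
  have hz1 : kernel.ι f ≫ e = 0 := by
    rw [← cancel_mono m, Category.assoc, hfac, kernel.condition, zero_comp]
  set S1 : ShortComplex 𝒜 := ShortComplex.mk (kernel.ι f) e hz1 with hS1def
  have hS1 : S1.ShortExact := by
    refine ⟨?_⟩
    rw [ShortComplex.exact_iff_exact_up_to_refinements]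
    intro A x₂ hx₂
    have h : x₂ ≫ f = 0 := by
      rw [← hfac, ← Category.assoc]
      dsimp [S1] at hx₂
      rw [hx₂, zero_comp]
    exact ⟨A, 𝟙 A, inferInstance, kernel.lift f x₂ h, by simp [S1]⟩
  -- the short exact sequence `im f → N → coker f`
  have hz2 : m ≫ cokernel.π f = 0 := by
    rw [← cancel_epi e, ← Category.assoc, hfac, cokernel.condition, comp_zero]
  set S2 : ShortComplex 𝒜 := ShortComplex.mk m (cokernel.π f) hz2 with hS2def
  have hS2 : S2.ShortExact := by
    refine ⟨?_⟩
    rw [ShortComplex.exact_iff_exact_up_to_refinements]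
    intro A x₂ hx₂
    obtain ⟨A', π, hπ, z, hz⟩ :=
      ((ShortComplex.mk f (cokernel.π f) (cokernel.condition f)).exact_of_g_is_cokernel
        (cokernelIsCokernel f)).exact_up_to_refinements x₂ hx₂
    dsimp at hz
    exact ⟨A', π, hπ, z ≫ e, by rw [hz, ← hfac]; simp [S1, S2]⟩
  -- `coker (T^i m)` is a subobject of `T^i (coker f)`
  have hm_c : P (cokernel ((T.T i).map m)) := by
    haveI : Mono (cokernel.desc ((T.T i).map m) ((T.T i).map (cokernel.π f))
        (T.zero₁ S2 hS2 i)) :=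
      (ShortComplex.exact_iff_mono_cokernel_desc _).mp (T.exact₁ S2 hS2 i)
    exact hP_sub (cokernel.desc ((T.T i).map m) ((T.T i).map (cokernel.π f))
      (T.zero₁ S2 hS2 i)) h1
  -- `coker (T^i e)` is a subobject of `T^{i+1} (ker f)`
  have he_c : P (cokernel ((T.T i).map e)) := by
    haveI : Mono (cokernel.desc ((T.T i).map e) (T.δ S1 hS1 i) (T.zero₂ S1 hS1 i)) :=
      (ShortComplex.exact_iff_mono_cokernel_desc _).mp (T.exact₂ S1 hS1 i)
    exact hP_sub (cokernel.desc ((T.T i).map e) (T.δ S1 hS1 i) (T.zero₂ S1 hS1 i)) h2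
  -- `ker (T^{i+1} e)` is a quotient of `T^{i+1} (ker f)`
  have he_k : P (kernel ((T.T (i + 1)).map e)) := by
    haveI : Epi (kernel.lift ((T.T (i + 1)).map e) ((T.T (i + 1)).map (kernel.ι f))
        (T.zero₁ S1 hS1 (i + 1))) :=
      (ShortComplex.exact_iff_epi_kernel_lift _).mp (T.exact₁ S1 hS1 (i + 1))
    exact hP_quot (kernel.lift ((T.T (i + 1)).map e) ((T.T (i + 1)).map (kernel.ι f))
      (T.zero₁ S1 hS1 (i + 1))) h2
  -- `ker (T^{i+1} m)` is a quotient of `T^i (coker f)`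
  have hm_k : P (kernel ((T.T (i + 1)).map m)) := by
    haveI : Epi (kernel.lift ((T.T (i + 1)).map m) (T.δ S2 hS2 i) (T.zero₃ S2 hS2 i)) :=
      (ShortComplex.exact_iff_epi_kernel_lift _).mp (T.exact₃ S2 hS2 i)
    exact hP_quot (kernel.lift ((T.T (i + 1)).map m) (T.δ S2 hS2 i) (T.zero₃ S2 hS2 i)) h1
  have hmapf : ∀ j : ℕ, (T.T j).map f = (T.T j).map e ≫ (T.T j).map m := by
    intro j
    rw [← Functor.map_comp, hfac]
  constructor
  · rw [hmapf i]
    exact serre_mid P hP_sub hP_quot hP_ext _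
      (coker_seq_exact ((T.T i).map e) ((T.T i).map m)) he_c hm_c
  · rw [hmapf (i + 1)]
    exact serre_mid P hP_sub hP_quot hP_ext _
      (ker_seq_exact ((T.T (i + 1)).map e) ((T.T (i + 1)).map m)) he_k hm_k

end
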